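/- Let G be a group, let N and M be finite sets, and let σ : G → Sym(N) and τ : G → Sym(M) be group actions. Let W : M × N → ℝ be a weight matrix satisfying the parameter-sharing condition W(τ_g(m), σ_g(n)) = W(m, n) for all g ∈ G, m ∈ M, n ∈ N (i.e., W is constant on the orbits of the paired action of G on M × N). Define the linear map φ : (N → ℝ) → (M → ℝ) by φ(x)(m) = Σ_{n ∈ N} W(m, n)·x(n). Then φ is G-equivariant with respect to the induced actions on function spaces: for every g ∈ G and every x : N → ℝ, φ(x ∘ σ_g^{-1}) = φ(x) ∘ τ_g^{-1}. -/

import Mathlib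

theorem Equiv.Perm.sum_mul_inv_apply_eq_of_invariant {M N R : Type*} [Fintype N]
    [AddCommMonoid R] [Mul R] (e : Equiv.Perm N) (f : Equiv.Perm M) (W : M × N → R)
    (hW : ∀ (m : M) (n : N), W (f m, e n) = W (m, n)) (x : N → R) (m : M) :
    ∑ n : N, W (m, n) * x (e⁻¹ n) = ∑ n : N, W (f⁻¹ m, n) * x n := by
  refine (Fintype.sum_equiv e _ _ fun n => ?_).symm
  rw [← hW (f⁻¹ m) n]
  simp only [inv_def, apply_symm_apply, symm_apply_apply]

/-- If a weight matrix `W : M × N → ℝ` is constant on the orbits of the paired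
action of `G` on `M × N`, then the linear map `x ↦ (m ↦ ∑ n, W (m, n) * x n)` is
`G`-equivariant with respect to the induced actions on function spaces. -/
theorem parameter_sharing_equivariant
    {G N M : Type*} [Group G] [Fintype N]
    (σ : G →* Equiv.Perm N) (τ : G →* Equiv.Perm M)
    (W : M × N → ℝ)
    (hW : ∀ (g : G) (m : M) (n : N), W (τ g m, σ g n) = W (m, n)) :
    ∀ (g : G) (x : N → ℝ) (m : M),
      (∑ n : N, W (m, n) * (x ∘ ⇑(σ g)⁻¹) n) =
        ((fun m' => ∑ n : N, W (m', n) * x n) ∘ ⇑(τ g)⁻¹) m := by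
  intro g x m
  exact (σ g).sum_mul_inv_apply_eq_of_invariant (τ g) W (hW g) x m
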